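/- arXiv:2103.12875 — 2 statements merged into one kernel-verified Lean document; each statement's English description precedes it below -/
import Mathlib

section
/- Let z be a Dyck vector and let v = 0 0 z⁺, where z⁺ is obtained from z by adding 1 to every entry. Then len(v) = len(z) + 2, area(v) = area(z) + len(z), dinv(v) = dinv(z) + 1, and defc(v) = defc(z) + len(z) > defc(z). -/
/-- dinv contribution of an entry coming from extended negative positions. -/
def negContrib (x : ℤ) : ℕ := (if x ≤ -1 then 1 else 0) + (if x ≤ -2 then 1 else 0)

/-- The diagonal inversion statistic of a quasi-Dyck vector, with the
convention `v_k = k - 1` for `k ≤ 0`. -/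
def dinv (v : List ℤ) : ℕ :=
  (Finset.univ.filter (fun p : Fin v.length × Fin v.length =>
      (p.1 : ℕ) < (p.2 : ℕ) ∧ (v.get p.1 - v.get p.2 = 0 ∨ v.get p.1 - v.get p.2 = 1))).card
  + (v.map negContrib).sum

def area (v : List ℤ) : ℤ := v.sum

def defc (v : List ℤ) : ℤ := (v.length.choose 2 : ℤ) - area v - (dinv v : ℤ)

/-- Quasi-Dyck vector: nonempty, starts with 0, consecutive increases ≤ 1. -/
def IsQDV (v : List ℤ) : Prop :=
  v.head? = some 0 ∧ ∀ i : ℕ, i + 1 < v.length → v.getD (i + 1) 0 ≤ v.getD i 0 + 1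

def IsDyck (v : List ℤ) : Prop := IsQDV v ∧ ∀ x ∈ v, 0 ≤ x

def stepRel (v w : List ℤ) : Prop := w = 0 :: v.map (· + 1)

def dyckEquiv : List ℤ → List ℤ → Prop := Relation.EqvGen stepRel

def dyckSetoid : Setoid (List ℤ) := Relation.EqvGen.setoid stepRel

abbrev DyckClass := Quotient dyckSetoid

def cls (v : List ℤ) : DyckClass := Quotient.mk dyckSetoid v

/-- Reduced Dyck vector: a Dyck vector that is not `0 z⁺` for a Dyck vector `z`. -/
def IsReducedDV (v : List ℤ) : Prop :=
  IsDyck v ∧ ¬ ∃ z : List ℤ, IsDyck z ∧ v = 0 :: z.map (· + 1)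

/-- The leader of a QDV: the largest `d` such that `v` starts with `0,1,...,d`. -/
def leader (v : List ℤ) : ℕ :=
  Nat.findGreatest (fun d => ∀ i, i ≤ d → v.getD i 0 = (i : ℤ)) (v.length - 1)

/-- Delete the leader symbol and append `leader - 1`. -/
def nuStep (v : List ℤ) : List ℤ :=
  v.take (leader v) ++ v.drop (leader v + 1) ++ [(leader v : ℤ) - 1]

def nuApplies (v : List ℤ) : Prop :=
  IsQDV v ∧ 2 ≤ v.length ∧ 0 ≤ v.getD 1 0 ∧ (leader v : ℤ) ≤ v.getLastD 0 + 2

/-- The map NU₁ on Dyck classes, as a relation. -/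
def nuClassRel (c c' : DyckClass) : Prop :=
  ∃ v, nuApplies v ∧ c = cls v ∧ c' = cls (nuStep v)

def stepOk (A : List ℤ) : Prop := ∀ i : ℕ, i + 1 < A.length → A.getD (i + 1) 0 ≤ A.getD i 0 + 1

def okA (A : List ℤ) : Prop :=
  A = [] ∨ ((∀ x ∈ A, x ≤ 2) ∧ 0 ≤ A.getLastD 0 ∧ stepOk A)

def okB (B : List ℤ) : Prop :=
  B = [] ∨ ((∀ x ∈ B, x ≤ 2) ∧ B.headD 0 ≤ 1 ∧ -1 ≤ B.getLastD 0 ∧ stepOk B)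

/-- The map NU₂ on Dyck classes, as a relation. -/
def nu2ClassRel (c c' : DyckClass) : Prop :=
  (∃ (h : ℕ) (A : List ℤ), 2 ≤ h ∧ okA A ∧
      c = cls ([0, 1] ++ List.replicate h (2:ℤ) ++ A ++ List.replicate (h - 1) (-1)) ∧
      c' = cls (List.replicate h (0:ℤ) ++ [1] ++ A ++ List.replicate h 1)) ∨
  (∃ (k : ℕ) (B : List ℤ), 1 ≤ k ∧ okB B ∧
      c = cls ([0, 1] ++ List.replicate k (2:ℤ) ++ B ++ List.replicate k (-1)) ∧
      c' = cls (List.replicate (k + 1) (0:ℤ) ++ B ++ [0] ++ List.replicate k 1))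

/-- The extended next-up map NU = NU₁ ∪ NU₂, as a relation on Dyck classes. -/
def nuRel (c c' : DyckClass) : Prop := nuClassRel c c' ∨ nu2ClassRel c c'

/-- An integer partition, given by its weakly decreasing list of positive parts. -/
def IsPartitionList (l : List ℕ) : Prop := l.Pairwise (· ≥ ·) ∧ ∀ x ∈ l, 0 < x

/-- `phi l n` = the QDV `(0 - λ_n, 1 - λ_{n-1}, ..., (n-1) - λ_1)`. -/
def phi (l : List ℕ) (n : ℕ) : List ℤ :=
  List.ofFn (fun i : Fin n => (i : ℤ) - (l.getD (n - 1 - (i : ℕ)) 0 : ℤ))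

def nuOne (g : List ℕ) : List ℕ :=
  (g.length + 1) :: (g.map (· - 1)).filter (fun x => 0 < x)

def ndOne (g : List ℕ) : List ℕ :=
  g.tail.map (· + 1) ++ List.replicate (g.headD 0 - g.length) 1

/-- dinv of a partition: number of cells with arm - leg ∈ {0,1}. -/
def pdinv (l : List ℕ) : ℕ :=
  (Finset.univ.filter (fun c : Fin l.length × Fin (l.headD 0) =>
    (c.2 : ℕ) < l.get c.1 ∧
      (l.get c.1 - 1 - (c.2 : ℕ) =
          (Finset.univ.filter (fun i' : Fin l.length =>
            (c.1 : ℕ) < (i' : ℕ) ∧ (c.2 : ℕ) < l.get i')).card ∨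
        l.get c.1 - 1 - (c.2 : ℕ) =
          (Finset.univ.filter (fun i' : Fin l.length =>
            (c.1 : ℕ) < (i' : ℕ) ∧ (c.2 : ℕ) < l.get i')).card + 1))).card

/-- `bWord [n_1, ..., n_r]` = `0 1^{n_1} 0 1^{n_2} ⋯ 0 1^{n_r}`. -/
def bWord (ns : List ℕ) : List ℤ :=
  (ns.map (fun m => (0:ℤ) :: List.replicate m 1)).flatten

/-- `msize [n_1, ..., n_r] = Σ i·n_i`, the size of the partition `(r^{n_r},...,1^{n_1})`. -/
def msize (ns : List ℕ) : ℕ :=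
  (List.zipWith (fun m i => m * i) ns (List.range' 1 ns.length)).sum

/-- The reduced Dyck vector `0 B_μ` of the tail initiator of a partition. -/
def tiVec (l : List ℕ) : List ℤ :=
  (0:ℤ) :: ((List.range' 1 (l.headD 0)).map
    (fun i => (0:ℤ) :: List.replicate (l.count i) (1:ℤ))).flatten

/-- `c` is the second-order tail initiator of the partition `l`: obtained from
`[0 B_μ]` by iterating the extended next-down map as long as possible. -/
def IsTI2 (l : List ℕ) (c : DyckClass) : Prop :=
  Relation.ReflTransGen (fun x y => nuRel y x) (cls (tiVec l)) c ∧ ∀ d, ¬ nuRel d c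

/-- `m` is the minimum triangle height of the Dyck class `c`. -/
def mindIs (c : DyckClass) (m : ℕ) : Prop :=
  ∃ v, IsReducedDV v ∧ c = cls v ∧ v.length = m

/-- Flagpole partition: `|μ| + 8 ≤ 2 mind(TI₂(μ))`. -/
def IsFlagpole (l : List ℕ) : Prop :=
  ∃ c m, IsTI2 l c ∧ mindIs c m ∧ l.sum + 8 ≤ 2 * m

/-- The Dyck vector `v(λ,a,ε) = 0 0 1 2^{a-ε} B_λ⁺ 1^ε`. -/
def vLam (ns : List ℕ) (a ε : ℕ) : List ℤ :=
  [0, 0, 1] ++ List.replicate (a - ε) (2:ℤ) ++ (bWord ns).map (· + 1) ++ List.replicate ε 1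

/-!
The leading `0 0` of `v = 0 0 z⁺` contributes the single dinv pair `(v₀, v₁)`: every entry of `z⁺`
is at least `1`, so it pairs with neither leading `0`, while pairs inside `z⁺` are those of `z`
since dinv only sees differences. The boundary term `negContrib` vanishes on both vectors, as it
only counts negative entries. Then `C(n+2, 2) = C(n, 2) + 2n + 1` gives `defc v = defc z + n`,
and `n > 0` because a Dyck vector starts with `0`.
-/

open Finset

theorem List.countP_eq_card_filter_fin {α : Type*} (p : α → Bool) (l : List α) :
    l.countP p = #{i : Fin l.length | p l[i]} := by
  induction l with
  | nil => simp
  | cons a l ih =>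
    rw [List.countP_cons, ih, Finset.card_filter, Finset.card_filter]
    exact ((Fin.sum_univ_succ _).trans (add_comm _ _)).symm

section PairCount

variable {α β : Type*} (r : α → α → Prop) [DecidableRel r]

def pairCount (v : List α) : ℕ :=
  #{p : Fin v.length × Fin v.length | (p.1 : ℕ) < (p.2 : ℕ) ∧ r (v.get p.1) (v.get p.2)}

lemma pairCount_cons (a : α) (l : List α) :
    pairCount r (a :: l) = l.countP (fun b => r a b) + pairCount r l := by
  simp only [pairCount, card_filter, Fintype.sum_prod_type, List.countP_eq_card_filter_fin]
  refine (Fin.sum_univ_succ _).trans ?_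
  congr 1
  · refine (Fin.sum_univ_succ _).trans ?_
    simp
  · refine sum_congr rfl fun i _ => (Fin.sum_univ_succ _).trans ?_
    simp

lemma pairCount_map {s : β → β → Prop} [DecidableRel s] {f : β → α}
    (hf : ∀ a b, r (f a) (f b) ↔ s a b) (l : List β) :
    pairCount r (l.map f) = pairCount s l := by
  induction l with
  | nil => rfl
  | cons a l ih =>
    simp only [List.map_cons, pairCount_cons, ih, List.countP_map]
    congr 1
    exact List.countP_congr fun b _ => by simp [hf]

end PairCount

lemma dinv_eq_pairCount_add (v : List ℤ) :
    dinv v = pairCount (fun a b : ℤ => a - b = 0 ∨ a - b = 1) v + (v.map negContrib).sum :=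
  rfl

lemma sum_map_negContrib_eq_zero {v : List ℤ} (hv : ∀ x ∈ v, 0 ≤ x) :
    (v.map negContrib).sum = 0 :=
  List.sum_eq_zero fun n hn => by
    obtain ⟨x, hx, rfl⟩ := List.mem_map.1 hn
    have := hv x hx
    simp only [negContrib]
    split_ifs <;> omega

lemma area_map_add_one (z : List ℤ) : area (z.map (· + 1)) = area z + z.length := by
  simp [area, List.sum_map_add]

lemma area_zero_zero_map_add_one (z : List ℤ) :
    area (0 :: 0 :: z.map (· + 1)) = area z + z.length := by
  show (0 : ℤ) + (0 + area (z.map (· + 1))) = _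
  rw [area_map_add_one]
  ring

lemma dinv_zero_zero_map_add_one {z : List ℤ} (hz : ∀ x ∈ z, 0 ≤ x) :
    dinv (0 :: 0 :: z.map (· + 1)) = dinv z + 1 := by
  have hv : ∀ x ∈ 0 :: 0 :: z.map (· + 1), 0 ≤ x := by
    simp only [List.mem_cons, List.mem_map]
    rintro x (rfl | rfl | ⟨y, hy, rfl⟩)
    · rfl
    · rfl
    · linarith [hz y hy]
  have no_pair_with_zero :
      (z.map (· + 1)).countP (fun b : ℤ => 0 - b = 0 ∨ 0 - b = 1) = 0 := by
    simp only [List.countP_eq_zero, List.mem_map]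
    rintro _ ⟨y, hy, rfl⟩
    have := hz y hy
    simp only [decide_eq_true_eq]
    omega
  rw [dinv_eq_pairCount_add, dinv_eq_pairCount_add, pairCount_cons, pairCount_cons,
    pairCount_map (s := fun a b : ℤ => a - b = 0 ∨ a - b = 1) _ (fun a b => by simp),
    sum_map_negContrib_eq_zero hz, sum_map_negContrib_eq_zero hv, List.countP_cons,
    no_pair_with_zero]
  simp only [sub_self, true_or, decide_true, if_pos]
  omega

lemma choose_two_add_two (n : ℕ) : (n + 2).choose 2 = n.choose 2 + 2 * n + 1 := by
  simp only [Nat.choose_succ_succ', Nat.choose_zero_right, zero_add, Nat.choose_one_right,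
    Nat.reduceAdd]
  ring

theorem stmt5 (z : List ℤ) (hz : IsDyck z) :
    ((0:ℤ) :: 0 :: z.map (· + 1)).length = z.length + 2 ∧
    area ((0:ℤ) :: 0 :: z.map (· + 1)) = area z + z.length ∧
    dinv ((0:ℤ) :: 0 :: z.map (· + 1)) = dinv z + 1 ∧
    defc ((0:ℤ) :: 0 :: z.map (· + 1)) = defc z + z.length ∧
    defc z < defc ((0:ℤ) :: 0 :: z.map (· + 1)) := by
  obtain ⟨⟨hhead, -⟩, hnonneg⟩ := hz
  have hlen : ((0:ℤ) :: 0 :: z.map (· + 1)).length = z.length + 2 := by simp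
  have harea := area_zero_zero_map_add_one z
  have hdinv := dinv_zero_zero_map_add_one hnonneg
  have hdefc : defc ((0:ℤ) :: 0 :: z.map (· + 1)) = defc z + z.length := by
    rw [defc, defc, hlen, harea, hdinv, choose_two_add_two]
    push_cast
    ring
  have hpos : 0 < z.length := List.length_pos_of_ne_nil (by rintro rfl; simp at hhead)
  exact ⟨hlen, harea, hdinv, hdefc, by omega⟩
end

section
/- dinv is constant on Dyck classes: for any quasi-Dyck vector v, dinv(0 v⁺) = dinv(v); similarly defc(0 v⁺) = defc(v). -/
/-! The number of pairs `i < j` with `v_i - v_j ∈ {0, 1}` satisfies a recursion on the first entry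
and is invariant under adding a constant to all entries. Passing from `v` to `0 v⁺` therefore only
adds the pairs formed with the new first entry `0`, namely one for each `v_j ∈ {-1, -2}`, and these
are exactly the entries whose extended-position contribution drops by one on shifting to
`v_j + 1`. For `defc`, both `C(n, 2)` and the area grow by `n`. -/

def dinvPairs (v : List ℤ) : ℕ :=
  (Finset.univ.filter (fun p : Fin v.length × Fin v.length =>
      (p.1 : ℕ) < (p.2 : ℕ) ∧ (v.get p.1 - v.get p.2 = 0 ∨ v.get p.1 - v.get p.2 = 1))).card

theorem dinv_eq_dinvPairs_add (v : List ℤ) : dinv v = dinvPairs v + (v.map negContrib).sum := rfl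

theorem dinvPairs_cons (a : ℤ) (l : List ℤ) :
    dinvPairs (a :: l) =
      (l.map fun b => if a - b = 0 ∨ a - b = 1 then 1 else 0).sum + dinvPairs l := by
  simp only [dinvPairs, Finset.card_filter, Fintype.sum_prod_type, List.length_cons,
    Fin.sum_univ_succ, List.get_eq_getElem, Fin.val_zero, Fin.val_succ, List.getElem_cons_zero,
    List.getElem_cons_succ, Nat.not_lt_zero, Nat.succ_lt_succ_iff, Nat.zero_lt_succ,
    false_and, true_and, if_false, zero_add]
  exact congrArg (· + _)
    (Fin.sum_univ_fun_getElem l fun b => if a - b = 0 ∨ a - b = 1 then 1 else 0)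

theorem dinvPairs_map_add (c : ℤ) (l : List ℤ) : dinvPairs (l.map (· + c)) = dinvPairs l := by
  induction l with
  | nil => rfl
  | cons a l ih => simp [dinvPairs_cons, ih, Function.comp_def]

theorem negContrib_eq_succ_add (x : ℤ) :
    negContrib x = negContrib (x + 1) + if 0 - (x + 1) = 0 ∨ 0 - (x + 1) = 1 then 1 else 0 := by
  simp only [negContrib]
  split_ifs <;> omega

theorem dinv_zero_cons_map_succ (v : List ℤ) : dinv (0 :: v.map (· + 1)) = dinv v := by
  have hneg : (v.map negContrib).sum = ((v.map (· + 1)).map negContrib).sum +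
      ((v.map (· + 1)).map fun b => if 0 - b = 0 ∨ 0 - b = 1 then 1 else 0).sum := by
    simp only [List.map_map, Function.comp_def, ← List.sum_map_add]
    exact congrArg List.sum (List.map_congr_left fun x _ => negContrib_eq_succ_add x)
  rw [dinv_eq_dinvPairs_add, dinvPairs_cons, dinvPairs_map_add, dinv_eq_dinvPairs_add, hneg,
    List.map_cons, List.sum_cons, show negContrib 0 = 0 from rfl]
  ring

theorem area_zero_cons_map_succ (v : List ℤ) :
    area (0 :: v.map (· + 1)) = area v + v.length := by
  simp [area, List.sum_map_add]

theorem defc_zero_cons_map_succ (v : List ℤ) : defc (0 :: v.map (· + 1)) = defc v := by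
  rw [defc, defc, dinv_zero_cons_map_succ, area_zero_cons_map_succ, List.length_cons,
    List.length_map, Nat.choose_succ_succ', Nat.choose_one_right]
  push_cast
  ring

theorem stmt7_general (v : List ℤ) :
    dinv ((0:ℤ) :: v.map (· + 1)) = dinv v ∧
    defc ((0:ℤ) :: v.map (· + 1)) = defc v :=
  ⟨dinv_zero_cons_map_succ v, defc_zero_cons_map_succ v⟩

theorem stmt7 (v : List ℤ) (hv : IsQDV v) :
    dinv ((0:ℤ) :: v.map (· + 1)) = dinv v ∧
    defc ((0:ℤ) :: v.map (· + 1)) = defc v :=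
  stmt7_general v
end
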